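/- arXiv:1301.0477 — 2 statements merged into one kernel-verified Lean document; each statement's English description precedes it below -/
import Mathlib

section
/- Let S be an overlay structure of p : X → Y with X connected, and let G be the group of deck transformations of p preserving S. Then the action of G on X is free, and it is an overlay action with overlay structure S. -/
open Set Pointwise

/-- `p` restricts to a homeomorphism of `U ⊆ X` onto `V ⊆ Y`. -/
def RestrictsToHomeo {X Y : Type*} [TopologicalSpace X] [TopologicalSpace Y]
    (p : X → Y) (U : Set X) (V : Set Y) : Prop :=
  ∃ e : U ≃ₜ V, ∀ u : U, (e u : Y) = p u

/-- A **slice** of `p : X → Y`: an open set `U ⊆ X` such that `p ⁻¹' (p '' U)` is a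
disjoint union of open sets, one of which is `U`, each mapped by `p` homeomorphically
onto `p '' U`. -/
def IsSlice {X Y : Type*} [TopologicalSpace X] [TopologicalSpace Y]
    (p : X → Y) (U : Set X) : Prop :=
  IsOpen U ∧ ∃ D : Set (Set X), U ∈ D ∧ (∀ W ∈ D, IsOpen W) ∧
    D.PairwiseDisjoint id ∧ ⋃₀ D = p ⁻¹' (p '' U) ∧
    ∀ W ∈ D, RestrictsToHomeo p W (p '' U)

/-- A **covering structure** of `p : X → Y`: an open cover `S` of `X` by slices of `p`
such that for each `U ∈ S`, `p ⁻¹' (p '' U)` is a disjoint union of elements of `S`,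
each with image `p '' U`. -/
def IsCoveringStructure {X Y : Type*} [TopologicalSpace X] [TopologicalSpace Y]
    (p : X → Y) (S : Set (Set X)) : Prop :=
  (∀ U ∈ S, IsSlice p U) ∧ ⋃₀ S = Set.univ ∧
    ∀ U ∈ S, ∃ D ⊆ S, D.PairwiseDisjoint id ∧ ⋃₀ D = p ⁻¹' (p '' U) ∧
      ∀ W ∈ D, p '' W = p '' U

/-- The **star** of a point `x` with respect to a family `S` of subsets. -/
def st {X : Type*} (x : X) (S : Set (Set X)) : Set X := ⋃₀ {U | U ∈ S ∧ x ∈ U}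

/-- An **overlay structure** of `p : X → Y`: a covering structure `S` such that for every
`x ∈ X` the star `st x S` is a slice of `p`. -/
def IsOverlayStructure {X Y : Type*} [TopologicalSpace X] [TopologicalSpace Y]
    (p : X → Y) (S : Set (Set X)) : Prop :=
  IsCoveringStructure p S ∧ ∀ x : X, IsSlice p (st x S)

/-- `p` is an **overlay** if it admits an overlay structure. -/
def IsOverlay {X Y : Type*} [TopologicalSpace X] [TopologicalSpace Y]
    (p : X → Y) : Prop :=
  ∃ S : Set (Set X), IsOverlayStructure p S

/-- `h` is a deck transformation of `p` preserving `S`: a self-homeomorphism of `X`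
commuting with `p` that maps members of `S` to members of `S`. -/
def IsDeckPreserving {X Y : Type*} [TopologicalSpace X] [TopologicalSpace Y]
    (p : X → Y) (S : Set (Set X)) (h : X ≃ₜ X) : Prop :=
  (∀ x : X, p (h x) = p x) ∧ ∀ U ∈ S, h '' U ∈ S

lemma IsSlice.injOn {X Y : Type*} [TopologicalSpace X] [TopologicalSpace Y]
    {p : X → Y} {U : Set X} (h : IsSlice p U) : Set.InjOn p U := by
  obtain ⟨-, D, hUD, -, -, -, hhomeo⟩ := h
  obtain ⟨e, he⟩ := hhomeo U hUD
  intro u hu v hv hpv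
  have h1 : e ⟨u, hu⟩ = e ⟨v, hv⟩ := by
    apply Subtype.ext
    rw [he, he]
    exact hpv
  exact congrArg Subtype.val (e.injective h1)

/-- Let `S` be an overlay structure of `p : X → Y` with `X` connected, and let `G` be the
group of deck transformations of `p` preserving `S`.  Then the action of `G` on `X` is
free, and it is an overlay action with overlay structure `S`: every member of `S` is a
slice of the action, `S` covers `X` and is invariant under the action, and every star
`st x S` is a slice of the action. -/
theorem deck_action_is_overlay_action
    {X Y : Type*} [TopologicalSpace X] [TopologicalSpace Y] [ConnectedSpace X]
    (p : X → Y) (S : Set (Set X)) (hS : IsOverlayStructure p S) :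
    (∀ h : X ≃ₜ X, IsDeckPreserving p S h → (∃ x : X, h x = x) → ∀ x : X, h x = x) ∧
    (∀ U ∈ S, IsOpen U ∧ ∀ h : X ≃ₜ X, IsDeckPreserving p S h →
      (U ∩ h '' U).Nonempty → ∀ x : X, h x = x) ∧
    ⋃₀ S = Set.univ ∧
    (∀ U ∈ S, ∀ h : X ≃ₜ X, IsDeckPreserving p S h → h '' U ∈ S) ∧
    ∀ x : X, IsOpen (st x S) ∧ ∀ h : X ≃ₜ X, IsDeckPreserving p S h →
      (st x S ∩ h '' st x S).Nonempty → ∀ z : X, h z = z := by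
  obtain ⟨⟨hslice, hcover, -⟩, hstar⟩ := hS
  have hx_mem : ∀ x : X, x ∈ st x S := by
    intro x
    have hx : x ∈ ⋃₀ S := hcover ▸ Set.mem_univ x
    obtain ⟨U, hU, hxU⟩ := hx
    exact ⟨U, ⟨hU, hxU⟩, hxU⟩
  have free : ∀ h : X ≃ₜ X, IsDeckPreserving p S h → (∃ x : X, h x = x) →
      ∀ x : X, h x = x := by
    rintro h ⟨hp, hpres⟩ ⟨x0, hx0⟩
    set A : Set X := {x | h x = x} with hA
    have hopen : IsOpen A := by
      rw [isOpen_iff_forall_mem_open]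
      intro x hx
      obtain ⟨U, hU, hxU⟩ : x ∈ ⋃₀ S := hcover ▸ Set.mem_univ x
      refine ⟨U, ?_, (hslice U hU).1, hxU⟩
      intro u hu
      have h1 : u ∈ st x S := ⟨U, ⟨hU, hxU⟩, hu⟩
      have h2 : h u ∈ st x S := ⟨h '' U, ⟨hpres U hU, ⟨x, hxU, hx⟩⟩, ⟨u, hu, rfl⟩⟩
      exact (hstar x).injOn h2 h1 (hp u)
    have hclosed : IsClosed A := by
      rw [← isOpen_compl_iff, isOpen_iff_forall_mem_open]
      intro x hx
      obtain ⟨hWo, D, hWD, hDopen, hdisj, hsU, -⟩ := hstar x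
      have hxW : x ∈ st x S := hx_mem x
      have hhx : h x ∈ ⋃₀ D := by
        rw [hsU]; exact Set.mem_preimage.mpr ⟨x, hxW, (hp x).symm⟩
      obtain ⟨W', hW', hhxW'⟩ := hhx
      have hne : W' ≠ st x S := by
        intro heq
        exact hx ((hstar x).injOn (heq ▸ hhxW') hxW (hp x))
      refine ⟨st x S ∩ h ⁻¹' W', ?_,
        hWo.inter (h.continuous.isOpen_preimage W' (hDopen W' hW')), hxW, hhxW'⟩
      rintro y ⟨hy1, hy2⟩ hy
      have hyW' : y ∈ W' := hy ▸ hy2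
      exact (Set.disjoint_left.mp (hdisj hW' hWD hne) hyW' hy1).elim
    rcases isClopen_iff.mp ⟨hclosed, hopen⟩ with h0 | h1
    · exact absurd (h0 ▸ (hx0 : x0 ∈ A)) (Set.notMem_empty x0)
    · intro x
      have : x ∈ A := h1.symm ▸ Set.mem_univ x
      exact this
  refine ⟨free, ?_, hcover, fun U hU h hh => hh.2 U hU, ?_⟩
  · intro U hU
    refine ⟨(hslice U hU).1, ?_⟩
    rintro h hh ⟨y, hyU, z, hzU, hzy⟩
    have hpzy : p z = p y := (hh.1 z).symm.trans (congrArg p hzy)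
    have hz : z = y := (hslice U hU).injOn hzU hyU hpzy
    exact free h hh ⟨z, hzy.trans hz.symm⟩
  · intro x
    refine ⟨isOpen_sUnion fun U hU => (hslice U hU.1).1, ?_⟩
    rintro h hh ⟨y, hyW, z, hzW, hzy⟩
    have hpzy : p z = p y := (hh.1 z).symm.trans (congrArg p hzy)
    have hz : z = y := (hstar x).injOn hzW hyW hpzy
    exact free h hh ⟨z, hzy.trans hz.symm⟩
end

section
/- Let p : X → Y be a regular overlay with X connected and Y a topological group. If there is an open neighborhood U of the identity of Y such that the family {U·y : y ∈ Y} is an overlay cover of Y for p, then there exists a topological group structure on X making p a continuous homomorphism. -/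
open Set Pointwise

/-- A `𝒰`-**chain**: a finite sequence of points such that each pair of consecutive
points lies in a common element of `𝒰`. -/
def IsChainIn {Y : Type*} (𝒰 : Set (Set Y)) {n : ℕ} (c : Fin (n + 1) → Y) : Prop :=
  ∀ i : Fin n, ∃ U ∈ 𝒰, c i.castSucc ∈ U ∧ c i.succ ∈ U

/-- Regularity of an overlay structure `S` of `p`: no loop in the overlay cover `p(S)`
has one lift that is an `S`-loop and another lift (an `S`-chain) that is not a loop. -/
def IsRegularStructure {X Y : Type*} [TopologicalSpace X] [TopologicalSpace Y]
    (p : X → Y) (S : Set (Set X)) : Prop :=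
  ∀ (n : ℕ) (d e : Fin (n + 1) → X), IsChainIn S d → IsChainIn S e →
    (∀ i, p (d i) = p (e i)) → d 0 = d (Fin.last n) → e 0 = e (Fin.last n)

/-!
For `g` in the open neighbourhood `U / U` of `1`, the points `p x` and `g * p x` lie in a common
translate of `U`, hence in a common member of the overlay cover, so lifting `g * p x` into the star
of `x` gives a continuous lift of the left translation by `g`. Composing such lifts and using that
`X` is connected, for a point `x₀` over `1` and any `a` there is a lift `φₐ` of a left translation
with `φₐ x₀ = a`; it is unique because an overlay is a separated, locally injective map. Then
`a * b := φₐ b` is a group law with `φ_{a * b} = φₐ ∘ φ_b` for which `p` is a homomorphism, and the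
operations are continuous because `φₐ = lift (p a * (p a₀)⁻¹) ∘ φ_{a₀}` for `a` near `a₀`.
-/

open Set Filter Topology Function

section Star

variable {X : Type*} {S : Set (Set X)}

theorem mem_st_of_mem {W : Set X} {x x' : X} (hW : W ∈ S) (hx : x ∈ W) (hx' : x' ∈ W) :
    x' ∈ st x S :=
  ⟨W, ⟨hW, hx⟩, hx'⟩

theorem mem_st_comm {x x' : X} : x' ∈ st x S ↔ x ∈ st x' S := by
  constructor <;> rintro ⟨W, ⟨hW, h⟩, h'⟩ <;> exact mem_st_of_mem hW h' h

end Star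

section OverlayStructure

variable {X Y : Type*} [TopologicalSpace X] [TopologicalSpace Y] {p : X → Y}
  {S : Set (Set X)}

theorem IsSlice.injOn_s17 {W : Set X} (h : IsSlice p W) : InjOn p W := by
  obtain ⟨-, D, hWD, -, -, -, hhomeo⟩ := h
  obtain ⟨e, he⟩ := hhomeo W hWD
  intro x hx x' hx' hxx'
  have : e ⟨x, hx⟩ = e ⟨x', hx'⟩ := Subtype.ext (by rw [he, he]; exact hxx')
  exact congrArg Subtype.val (e.injective this)

theorem IsCoveringStructure.exists_mem (hS : IsCoveringStructure p S) (x : X) :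
    ∃ W ∈ S, x ∈ W :=
  mem_sUnion.mp (hS.2.1 ▸ mem_univ x)

theorem IsCoveringStructure.exists_mem_image_eq (hS : IsCoveringStructure p S) {W : Set X}
    (hW : W ∈ S) {x : X} (hx : p x ∈ p '' W) : ∃ W' ∈ S, x ∈ W' ∧ p '' W' = p '' W := by
  obtain ⟨D, hDS, -, hD, hDW⟩ := hS.2.2 W hW
  obtain ⟨W', hW'D, hxW'⟩ := mem_sUnion.mp (hD ▸ hx : x ∈ ⋃₀ D)
  exact ⟨W', hDS hW'D, hxW', hDW W' hW'D⟩

theorem IsOverlayStructure.injOn_st (hS : IsOverlayStructure p S) (x : X) :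
    InjOn p (st x S) :=
  (hS.2 x).injOn_s17

theorem IsOverlayStructure.isLocallyInjective (hS : IsOverlayStructure p S) :
    IsLocallyInjective p := fun x => by
  obtain ⟨W, hW, hxW⟩ := hS.1.exists_mem x
  exact ⟨W, (hS.1.1 W hW).1, hxW, (hS.1.1 W hW).injOn_s17⟩

theorem IsOverlayStructure.isSeparatedMap (hS : IsOverlayStructure p S) :
    IsSeparatedMap p := fun x₁ x₂ hp hne => by
  obtain ⟨W₁, hW₁, hx₁⟩ := hS.1.exists_mem x₁
  obtain ⟨W₂, hW₂, hx₂⟩ := hS.1.exists_mem x₂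
  refine ⟨W₁, W₂, (hS.1.1 W₁ hW₁).1, (hS.1.1 W₂ hW₂).1, hx₁, hx₂,
    Set.disjoint_left.mpr fun z hz₁ hz₂ => hne ?_⟩
  exact hS.injOn_st z (mem_st_of_mem hW₁ hz₁ hx₁) (mem_st_of_mem hW₂ hz₂ hx₂) hp

variable [Nonempty X]

theorem IsOverlayStructure.invFunOn_st_apply (hS : IsOverlayStructure p S) {x x' : X}
    (hx' : x' ∈ st x S) : invFunOn p (st x S) (p x') = x' :=
  (hS.injOn_st x).leftInvOn_invFunOn hx'

/-- On `W × p(W)`, the lift to the star of the first coordinate is the inverse of `p|W`. -/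
theorem IsOverlayStructure.continuousAt_invFunOn_st (hS : IsOverlayStructure p S)
    {W : Set X} (hW : W ∈ S) (hWo : IsOpen (p '' W)) {x : X} {y : Y} (hx : x ∈ W)
    (hy : y ∈ p '' W) :
    ContinuousAt (fun q : X × Y => invFunOn p (st q.1 S) q.2) (x, y) := by
  obtain ⟨-, D, hWD, -, -, -, hhomeo⟩ := hS.1.1 W hW
  obtain ⟨e, he⟩ := hhomeo W hWD
  have hpe : ∀ z : p '' W, p (e.symm z) = z := fun z => by rw [← he, e.apply_symm_apply]
  have hopen : IsOpen (W ×ˢ (p '' W)) := (hS.1.1 W hW).1.prod hWo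
  refine ContinuousOn.continuousAt ?_ (hopen.mem_nhds ⟨hx, hy⟩)
  rw [continuousOn_iff_continuous_domRestrict]
  have heq : (W ×ˢ (p '' W)).domRestrict (fun q : X × Y => invFunOn p (st q.1 S) q.2) =
      fun q => (e.symm ⟨q.1.2, q.2.2⟩ : X) := funext fun q => by
    have hmem : (e.symm ⟨q.1.2, q.2.2⟩ : X) ∈ st q.1.1 S :=
      mem_st_of_mem hW q.2.1 (e.symm _).2
    simpa [hpe] using hS.invFunOn_st_apply hmem
  rw [heq]
  fun_prop

end OverlayStructure

section Lifts

variable {X Y : Type*} [TopologicalSpace X] [Group Y] {p : X → Y}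

def IsLeftTranslationLift (p : X → Y) (φ : X → X) : Prop :=
  Continuous φ ∧ ∃ g : Y, ∀ x, p (φ x) = g * p x

theorem isLeftTranslationLift_id : IsLeftTranslationLift p id :=
  ⟨continuous_id, 1, fun _ => (one_mul _).symm⟩

namespace IsLeftTranslationLift

variable {φ ψ : X → X}

theorem comp (hφ : IsLeftTranslationLift p φ) (hψ : IsLeftTranslationLift p ψ) :
    IsLeftTranslationLift p (φ ∘ ψ) := by
  obtain ⟨g, hg⟩ := hφ.2
  obtain ⟨h, hh⟩ := hψ.2
  exact ⟨hφ.1.comp hψ.1, g * h, fun x => by simp [hg, hh, mul_assoc]⟩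

theorem map_apply (hφ : IsLeftTranslationLift p φ) {x₀ : X} (hx₀ : p x₀ = 1) (x : X) :
    p (φ x) = p (φ x₀) * p x := by
  obtain ⟨g, hg⟩ := hφ.2
  rw [hg, hg, hx₀, mul_one]

theorem eq_of_apply_eq [TopologicalSpace Y] [PreconnectedSpace X] (hsep : IsSeparatedMap p)
    (hinj : IsLocallyInjective p) (hφ : IsLeftTranslationLift p φ)
    (hψ : IsLeftTranslationLift p ψ) {x : X} (h : φ x = ψ x) : φ = ψ := by
  obtain ⟨g, hg⟩ := hφ.2
  obtain ⟨g', hg'⟩ := hψ.2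
  have hgg' : g = g' := mul_right_cancel (by rw [← hg, ← hg', h])
  exact hsep.eq_of_comp_eq hinj hφ.1 hψ.1 (funext fun z => by simp [hg, hg', hgg']) x h

end IsLeftTranslationLift

variable [TopologicalSpace Y]

variable (p) in
structure LeftTranslationLifts where
  nhd : Set Y
  isOpen_nhd : IsOpen nhd
  one_mem_nhd : (1 : Y) ∈ nhd
  lift : Y → X → X
  continuousOn_lift : ContinuousOn (uncurry lift) (nhd ×ˢ univ)
  map_lift : ∀ g ∈ nhd, ∀ x, p (lift g x) = g * p x
  lift_inv_lift : ∀ g ∈ nhd, ∀ x, lift g⁻¹ (lift g x) = x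
  eventually_lift_eq : ∀ a, ∀ᶠ b in 𝓝 a, lift (p b * (p a)⁻¹) a = b

namespace LeftTranslationLifts

variable (L : LeftTranslationLifts p)

theorem continuousAt_lift {g : Y} (hg : g ∈ L.nhd) (x : X) :
    ContinuousAt (uncurry L.lift) (g, x) :=
  L.continuousOn_lift.continuousAt (prod_mem_nhds (L.isOpen_nhd.mem_nhds hg) univ_mem)

theorem isLeftTranslationLift {g : Y} (hg : g ∈ L.nhd) : IsLeftTranslationLift p (L.lift g) :=
  ⟨continuous_iff_continuousAt.mpr fun x =>
      (L.continuousAt_lift hg x).comp (continuousAt_const.prodMk continuousAt_id),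
    g, L.map_lift g hg⟩

variable [IsTopologicalGroup Y]

theorem eventually_mem_nhd (hp : Continuous p) (a : X) :
    ∀ᶠ b in 𝓝 a, p b * (p a)⁻¹ ∈ L.nhd ∧ (p b * (p a)⁻¹)⁻¹ ∈ L.nhd := by
  have h : Tendsto (fun b => p b * (p a)⁻¹) (𝓝 a) (𝓝 1) := by
    simpa using (hp.tendsto a).mul (tendsto_const_nhds (x := (p a)⁻¹))
  have hmem := L.isOpen_nhd.mem_nhds L.one_mem_nhd
  exact (h.eventually_mem hmem).and (h.inv.eventually_mem (by simpa using hmem))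

/-- Lifts compose and carry `x` to every nearby point, so the points reachable from `x` form a
clopen set. -/
theorem exists_isLeftTranslationLift_apply_eq (L : LeftTranslationLifts p) [PreconnectedSpace X]
    (hp : Continuous p) (x a : X) : ∃ φ, IsLeftTranslationLift p φ ∧ φ x = a := by
  refine PreconnectedSpace.induction₂' (fun x a => ∃ φ, IsLeftTranslationLift p φ ∧ φ x = a)
    (fun x => ?_)
    ⟨fun x y z ⟨φ, hφ, hφx⟩ ⟨ψ, hψ, hψy⟩ => ⟨ψ ∘ φ, hψ.comp hφ, by simp [hφx, hψy]⟩⟩ x a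
  filter_upwards [L.eventually_lift_eq x, L.eventually_mem_nhd hp x] with b hb ⟨hg, hg'⟩
  refine ⟨⟨_, L.isLeftTranslationLift hg, hb⟩, _, L.isLeftTranslationLift hg', ?_⟩
  simpa only [hb] using L.lift_inv_lift _ hg x

end LeftTranslationLifts

end Lifts

section GroupOfLifts

variable {X Y : Type*} [TopologicalSpace X] [TopologicalSpace Y] [Group Y] {p : X → Y}

variable (p) in
/-- Junk unless some lift of a left translation carries `x` to `a`. -/
noncomputable def liftThrough (x a : X) : X → X :=
  haveI : Nonempty (X → X) := ⟨id⟩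
  Classical.epsilon fun φ => IsLeftTranslationLift p φ ∧ φ x = a

variable [IsTopologicalGroup Y] [PreconnectedSpace X]

theorem isLeftTranslationLift_liftThrough (L : LeftTranslationLifts p) (hp : Continuous p)
    (x a : X) : IsLeftTranslationLift p (liftThrough p x a) ∧ liftThrough p x a x = a :=
  Classical.epsilon_spec (L.exists_isLeftTranslationLift_apply_eq hp x a)

theorem eq_liftThrough (L : LeftTranslationLifts p) (hp : Continuous p)
    (hsep : IsSeparatedMap p) (hinj : IsLocallyInjective p) {φ : X → X}
    (hφ : IsLeftTranslationLift p φ) (x : X) : φ = liftThrough p x (φ x) :=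
  hφ.eq_of_apply_eq hsep hinj (isLeftTranslationLift_liftThrough L hp x (φ x)).1
    (isLeftTranslationLift_liftThrough L hp x (φ x)).2.symm

theorem eventually_liftThrough_eq_comp (L : LeftTranslationLifts p) (hp : Continuous p)
    (hsep : IsSeparatedMap p) (hinj : IsLocallyInjective p) (x₀ a₀ : X) :
    ∀ᶠ a in 𝓝 a₀, liftThrough p x₀ a = L.lift (p a * (p a₀)⁻¹) ∘ liftThrough p x₀ a₀ := by
  filter_upwards [L.eventually_lift_eq a₀, L.eventually_mem_nhd hp a₀] with a ha hg
  have hlift :=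
    (L.isLeftTranslationLift hg.1).comp (isLeftTranslationLift_liftThrough L hp x₀ a₀).1
  rw [eq_liftThrough L hp hsep hinj hlift x₀, comp_apply,
    (isLeftTranslationLift_liftThrough L hp x₀ a₀).2, ha]

theorem eventually_liftThrough_eq_comp_inv (L : LeftTranslationLifts p) (hp : Continuous p)
    (hsep : IsSeparatedMap p) (hinj : IsLocallyInjective p) (x₀ a₀ : X) :
    ∀ᶠ a in 𝓝 a₀,
      liftThrough p a x₀ = liftThrough p a₀ x₀ ∘ L.lift (p a * (p a₀)⁻¹)⁻¹ := by
  filter_upwards [L.eventually_lift_eq a₀, L.eventually_mem_nhd hp a₀] with a ha hg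
  have hlift :=
    (isLeftTranslationLift_liftThrough L hp a₀ x₀).1.comp (L.isLeftTranslationLift hg.2)
  have ha₀ : L.lift (p a * (p a₀)⁻¹)⁻¹ a = a₀ := by
    simpa only [ha] using L.lift_inv_lift _ hg.1 a₀
  rw [eq_liftThrough L hp hsep hinj hlift a, comp_apply, ha₀,
    (isLeftTranslationLift_liftThrough L hp a₀ x₀).2]

theorem continuous_liftThrough_apply (L : LeftTranslationLifts p) (hp : Continuous p)
    (hsep : IsSeparatedMap p) (hinj : IsLocallyInjective p) (x₀ : X) :
    Continuous fun q : X × X => liftThrough p x₀ q.1 q.2 := by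
  refine continuous_iff_continuousAt.mpr fun ⟨a₀, b₀⟩ => ?_
  have hg : p a₀ * (p a₀)⁻¹ ∈ L.nhd := by simpa using L.one_mem_nhd
  have hφ := (isLeftTranslationLift_liftThrough L hp x₀ a₀).1.1
  have hlocal : ContinuousAt
      (fun q : X × X => L.lift (p q.1 * (p a₀)⁻¹) (liftThrough p x₀ a₀ q.2)) (a₀, b₀) :=
    (L.continuousAt_lift hg _).comp_of_eq
      (f := fun q : X × X => (p q.1 * (p a₀)⁻¹, liftThrough p x₀ a₀ q.2)) (by fun_prop) rfl
  refine hlocal.congr ?_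
  filter_upwards [(eventually_liftThrough_eq_comp L hp hsep hinj x₀ a₀).prod_inl_nhds b₀]
    with q hq
  rw [hq, comp_apply]

theorem continuous_liftThrough_apply_self (L : LeftTranslationLifts p) (hp : Continuous p)
    (hsep : IsSeparatedMap p) (hinj : IsLocallyInjective p) (x₀ : X) :
    Continuous fun a => liftThrough p a x₀ x₀ := by
  refine continuous_iff_continuousAt.mpr fun a₀ => ?_
  have hg : (p a₀ * (p a₀)⁻¹)⁻¹ ∈ L.nhd := by simpa using L.one_mem_nhd
  have hφ := (isLeftTranslationLift_liftThrough L hp a₀ x₀).1.1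
  have hlocal : ContinuousAt
      (fun a => liftThrough p a₀ x₀ (L.lift (p a * (p a₀)⁻¹)⁻¹ x₀)) a₀ :=
    hφ.continuousAt.comp ((L.continuousAt_lift hg x₀).comp_of_eq
      (f := fun a => ((p a * (p a₀)⁻¹)⁻¹, x₀)) (by fun_prop) rfl)
  refine hlocal.congr ?_
  filter_upwards [eventually_liftThrough_eq_comp_inv L hp hsep hinj x₀ a₀] with a ha
  rw [ha, comp_apply]

/-- `a * b` is the image of `b` under the lift of a left translation carrying `x₀` to `a`. -/
theorem exists_isTopologicalGroup_of_leftTranslationLifts (L : LeftTranslationLifts p)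
    (hp : Continuous p) (hsep : IsSeparatedMap p) (hinj : IsLocallyInjective p) {x₀ : X}
    (hx₀ : p x₀ = 1) :
    ∃ gX : Group X, (letI := gX; IsTopologicalGroup X ∧ ∀ a b : X, p (a * b) = p a * p b) := by
  have hspec := isLeftTranslationLift_liftThrough L hp
  have hunique : ∀ {φ : X → X}, IsLeftTranslationLift p φ → ∀ x, φ = liftThrough p x (φ x) :=
    eq_liftThrough L hp hsep hinj
  let : Mul X := ⟨fun a => liftThrough p x₀ a⟩
  let : One X := ⟨x₀⟩
  let : Inv X := ⟨fun a => liftThrough p a x₀ x₀⟩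
  have hmul : ∀ a b : X, liftThrough p x₀ (a * b) = liftThrough p x₀ a ∘ liftThrough p x₀ b :=
    fun a b => by
      rw [hunique ((hspec x₀ a).1.comp (hspec x₀ b).1) x₀, comp_apply, (hspec x₀ b).2]; rfl
  let gX : Group X := Group.ofLeftAxioms
    (fun a b c => congrFun (hmul a b) c)
    (fun a => (congrFun (hunique isLeftTranslationLift_id x₀) a).symm)
    (fun a => by
      change liftThrough p x₀ (liftThrough p a x₀ x₀) a = x₀
      rw [← hunique (hspec a x₀).1 x₀, (hspec a x₀).2])
  refine ⟨gX, { continuous_mul := continuous_liftThrough_apply L hp hsep hinj x₀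
                continuous_inv := continuous_liftThrough_apply_self L hp hsep hinj x₀ },
    fun a b => ?_⟩
  change p (liftThrough p x₀ a b) = p a * p b
  rw [(hspec x₀ a).1.map_apply hx₀, (hspec x₀ a).2]

end GroupOfLifts

theorem exists_apply_eq_one {X Y : Type*} [MulOneClass Y] {p : X → Y} {T : Set (Set X)}
    {U : Set Y} (hTU : {V : Set Y | ∃ W ∈ T, V = p '' W} = {V : Set Y | ∃ y : Y, V = U * {y}})
    (h1U : (1 : Y) ∈ U) : ∃ x, p x = 1 := by
  obtain ⟨W, -, hW⟩ : U * {1} ∈ {V : Set Y | ∃ W ∈ T, V = p '' W} := hTU ▸ ⟨1, rfl⟩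
  obtain ⟨x, -, hx⟩ : (1 : Y) ∈ p '' W := hW ▸ by simpa using h1U
  exact ⟨x, hx⟩

section TranslateCover

variable {X Y : Type*} [TopologicalSpace X] [TopologicalSpace Y] [Group Y] [IsTopologicalGroup Y]
  {p : X → Y} {T : Set (Set X)} {U : Set Y}

theorem exists_mem_mem_image_of_mem_div (hT : IsOverlayStructure p T)
    (hTU : {V : Set Y | ∃ W ∈ T, V = p '' W} = {V : Set Y | ∃ y : Y, V = U * {y}})
    (hU : IsOpen U) {g : Y} (hg : g ∈ U / U) (x : X) :
    ∃ W ∈ T, x ∈ W ∧ g * p x ∈ p '' W ∧ IsOpen (p '' W) := by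
  obtain ⟨u₁, hu₁, u₂, hu₂, rfl⟩ := hg
  obtain ⟨W₀, hW₀, hW₀U⟩ : U * {u₂⁻¹ * p x} ∈ {V : Set Y | ∃ W ∈ T, V = p '' W} :=
    hTU ▸ ⟨_, rfl⟩
  have hx : p x ∈ p '' W₀ := hW₀U ▸ ⟨u₂, hu₂, _, rfl, by group⟩
  obtain ⟨W, hW, hxW, hWW₀⟩ := hT.1.exists_mem_image_eq hW₀ hx
  refine ⟨W, hW, hxW, ?_⟩
  rw [hWW₀, ← hW₀U]
  exact ⟨⟨u₁, hu₁, _, rfl, by simp only [div_eq_mul_inv, mul_assoc]⟩, hU.mul_right⟩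

theorem exists_mem_st_apply_eq (hT : IsOverlayStructure p T)
    (hTU : {V : Set Y | ∃ W ∈ T, V = p '' W} = {V : Set Y | ∃ y : Y, V = U * {y}})
    (hU : IsOpen U) {g : Y} (hg : g ∈ U / U) (x : X) : ∃ x' ∈ st x T, p x' = g * p x := by
  obtain ⟨W, hW, hxW, ⟨x', hx'W, hx'⟩, -⟩ := exists_mem_mem_image_of_mem_div hT hTU hU hg x
  exact ⟨x', mem_st_of_mem hW hxW hx'W, hx'⟩

variable [Nonempty X]

noncomputable def leftTranslationLiftsOfCover (hT : IsOverlayStructure p T)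
    (hTU : {V : Set Y | ∃ W ∈ T, V = p '' W} = {V : Set Y | ∃ y : Y, V = U * {y}})
    (hp : Continuous p) (hU : IsOpen U) (h1U : (1 : Y) ∈ U) : LeftTranslationLifts p where
  nhd := U / U
  isOpen_nhd := hU.div_right
  one_mem_nhd := by simpa using div_mem_div h1U h1U
  lift g x := invFunOn p (st x T) (g * p x)
  continuousOn_lift := fun ⟨g, x⟩ ⟨hg, _⟩ => by
    obtain ⟨W, hW, hxW, hgW, hWo⟩ := exists_mem_mem_image_of_mem_div hT hTU hU hg x
    exact ((hT.continuousAt_invFunOn_st hW hWo hxW hgW).comp_of_eq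
      (f := fun q : Y × X => (q.2, q.1 * p q.2)) (by fun_prop) rfl).continuousWithinAt
  map_lift g hg x := invFunOn_eq (exists_mem_st_apply_eq hT hTU hU hg x)
  lift_inv_lift g hg x := by
    have hex := exists_mem_st_apply_eq hT hTU hU hg x
    have hx : x ∈ st (invFunOn p (st x T) (g * p x)) T := mem_st_comm.mp (invFunOn_mem hex)
    simpa [invFunOn_eq hex] using hT.invFunOn_st_apply hx
  eventually_lift_eq a := by
    obtain ⟨W, hW, haW⟩ := hT.1.exists_mem a
    filter_upwards [(hT.1.1 W hW).1.mem_nhds haW] with b hb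
    simpa using hT.invFunOn_st_apply (mem_st_of_mem hW haW hb)

end TranslateCover

theorem group_structure_on_domain_of_regular_overlay_general
    {X Y : Type*} [TopologicalSpace X] [TopologicalSpace Y]
    [Group Y] [IsTopologicalGroup Y] [ConnectedSpace X]
    (p : X → Y) (hc : Continuous p)
    (U : Set Y) (hU : IsOpen U) (h1U : (1 : Y) ∈ U)
    (hcover : ∃ T : Set (Set X), IsOverlayStructure p T ∧
      {V : Set Y | ∃ W ∈ T, V = p '' W} = {V : Set Y | ∃ y : Y, V = U * {y}}) :
    ∃ gX : Group X,
      (letI := gX;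
        IsTopologicalGroup X ∧ ∀ a b : X, p (a * b) = p a * p b) := by
  obtain ⟨T, hT, hTU⟩ := hcover
  obtain ⟨x₀, hx₀⟩ := exists_apply_eq_one hTU h1U
  exact exists_isTopologicalGroup_of_leftTranslationLifts
    (leftTranslationLiftsOfCover hT hTU hc hU h1U) hc hT.isSeparatedMap hT.isLocallyInjective hx₀

/-- Let `p : X → Y` be a regular overlay with `X` connected and `Y` a topological group.
If there is an open neighborhood `U` of the identity of `Y` such that the family
`{U·y : y ∈ Y}` is an overlay cover of `Y` for `p`, then there exists a topological group
structure on `X` making `p` a continuous homomorphism. -/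
theorem group_structure_on_domain_of_regular_overlay
    {X Y : Type*} [TopologicalSpace X] [TopologicalSpace Y]
    [Group Y] [IsTopologicalGroup Y] [ConnectedSpace X]
    (p : X → Y) (hc : Continuous p)
    (hreg : ∃ S : Set (Set X), IsOverlayStructure p S ∧ IsRegularStructure p S)
    (U : Set Y) (hU : IsOpen U) (h1U : (1 : Y) ∈ U)
    (hcover : ∃ T : Set (Set X), IsOverlayStructure p T ∧
      {V : Set Y | ∃ W ∈ T, V = p '' W} = {V : Set Y | ∃ y : Y, V = U * {y}}) :
    ∃ gX : Group X,
      (letI := gX;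
        IsTopologicalGroup X ∧ ∀ a b : X, p (a * b) = p a * p b) :=
  group_structure_on_domain_of_regular_overlay_general p hc U hU h1U hcover
end
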